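/- Let F : ℝ → ℝ be defined (near 0) by F(t) = (1/2)·1/√((1−t)(1−2t)(2t²+t+1)) − (1/2)·1/(1−t), with √ the real square root. Then for every n ≥ 3, the n-th iterated derivative of F at 0 is strictly positive. (The coefficients of the generating function f(t) = Σ Δ_n (2t)^n are strictly positive for all n ≥ 3; f is 3-samo.) -/

import Mathlib

/-- The generating-function expression
    `F(t) = (1/2)/√((1-t)(1-2t)(2t²+t+1)) - (1/2)/(1-t)`. -/
noncomputable def F (t : ℝ) : ℝ :=
  1 / 2 * (1 / Real.sqrt ((1 - t) * (1 - 2 * t) * (2 * t ^ 2 + t + 1))) -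
    1 / 2 * (1 / (1 - t))

/-!
Put `x = t³/(1-t)`. Then `(1-t)(1-2t)(2t²+t+1) = (1-t)²(1-4x)`, so the binomial series
`1/√(1-4x) = ∑ C(2k,k) xᵏ` gives `1/√((1-t)(1-2t)(2t²+t+1)) = ∑ₖ C(2k,k) t³ᵏ/(1-t)ᵏ⁺¹`.
Expanding `t³ᵏ/(1-t)ᵏ⁺¹ = ∑ₙ C(n-2k,k) tⁿ` and exchanging the two sums, which converge
absolutely for `|t| < 1/2`, the Taylor coefficients of the reciprocal square root are the
natural numbers `bₙ = ∑ₖ C(2k,k) C(n-2k,k)`, and those of `F` are `(bₙ - 1)/2`. The terms `k = 0, 1` alone give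
`bₙ ≥ 1 + 2(n-2) > 1` for `n ≥ 3`.
-/

open Nat

theorem Ring.multichoose_half_mul_four_pow {K : Type*} [Field K] [CharZero K] (n : ℕ) :
    Ring.multichoose (1 / 2 : K) n * 4 ^ n = n.centralBinom := by
  have hfac : (n ! : K) ≠ 0 := by exact_mod_cast n.factorial_ne_zero
  refine mul_left_cancel₀ hfac ?_
  rw [← mul_assoc, ← nsmul_eq_mul, Ring.factorial_nsmul_multichoose_eq_ascPochhammer,
    Polynomial.ascPochhammer_smeval_eq_eval]
  clear hfac
  induction n with
  | zero => simp
  | succ n ih =>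
    have h := congr_arg (fun m : ℕ => (m : K)) (succ_mul_centralBinom_succ n)
    push_cast at h
    rw [ascPochhammer_succ_eval, factorial_succ, pow_succ]
    push_cast
    linear_combination (4 * (1 / 2 + (n : K))) * ih - (n ! : K) * h

theorem hasSum_centralBinom_mul_pow {x : ℝ} (hx : |x| < 1 / 4) :
    HasSum (fun n => (n.centralBinom : ℝ) * x ^ n) (1 / √(1 - 4 * x)) := by
  have h4x : 4 * x ∈ Metric.eball (0 : ℝ) 1 := by
    rw [Metric.mem_eball, edist_zero_right, enorm_eq_nnnorm, ENNReal.coe_lt_one_iff,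
      ← NNReal.coe_lt_one, coe_nnnorm, norm_mul, Real.norm_ofNat, Real.norm_eq_abs]
    linarith
  have h := (Real.one_div_one_sub_rpow_hasFPowerSeriesOnBall_zero (1 / 2)).hasSum h4x
  simp only [FormalMultilinearSeries.ofScalars_apply_eq, zero_add, smul_eq_mul] at h
  rw [Real.sqrt_eq_rpow]
  refine h.congr_fun fun n => ?_
  rw [← Ring.multichoose_eq, ← Ring.multichoose_half_mul_four_pow, mul_pow, mul_assoc]

theorem hasSum_choose_sub_two_mul_mul_pow {𝕜 : Type*} [NormedField 𝕜] (k : ℕ) {t : 𝕜}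
    (ht : ‖t‖ < 1) :
    HasSum (fun n => ((n - 2 * k).choose k : 𝕜) * t ^ n) (t ^ (3 * k) / (1 - t) ^ (k + 1)) := by
  have hvanish : ∀ n ∈ Finset.range (3 * k), ((n - 2 * k).choose k : 𝕜) * t ^ n = 0 := by
    intro n hn
    rw [Finset.mem_range] at hn
    rw [Nat.choose_eq_zero_of_lt (by omega), Nat.cast_zero, zero_mul]
  rw [← hasSum_nat_add_iff' (3 * k), Finset.sum_eq_zero hvanish, sub_zero, div_eq_mul_one_div]
  refine ((hasSum_choose_mul_geometric_of_norm_lt_one k ht).mul_left _).congr_fun fun n => ?_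
  rw [show n + 3 * k - 2 * k = n + k by omega, pow_add]
  ring

theorem HasSum.of_rows_of_cols {α β γ : Type*} [AddCommMonoid α] [TopologicalSpace α]
    [ContinuousAdd α] [T3Space α] {f : β → γ → α} {g : β → α} {c : γ → α} {s : α}
    (hf : Summable (Function.uncurry f)) (hrow : ∀ b, HasSum (f b) (g b)) (hg : HasSum g s)
    (hcol : ∀ x, HasSum (fun b => f b x) (c x)) : HasSum c s := by
  have hs : HasSum (Function.uncurry f) s := by
    rw [← (hf.hasSum.prod_fiberwise hrow).unique hg]
    exact hf.hasSum
  exact ((Equiv.prodComm γ β).hasSum_iff.2 hs).prod_fiberwise hcol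

theorem abs_pow_three_div_one_sub_lt_one_div_four {t : ℝ} (ht : |t| < 1 / 2) :
    |t ^ 3 / (1 - t)| < 1 / 4 := by
  have h1 : 0 < 1 - |t| := by linarith
  calc |t ^ 3 / (1 - t)| ≤ |t| ^ 3 / (1 - |t|) := by
        rw [abs_div, abs_pow]
        gcongr
        simpa using abs_sub_abs_le_abs_sub 1 t
    _ < 1 / 4 := by
        have : |t| ^ 3 < (1 / 2) ^ 3 := pow_lt_pow_left₀ ht (abs_nonneg t) (by norm_num)
        rw [div_lt_iff₀ h1]
        linarith

theorem hasSum_centralBinom_mul_pow_three_mul_div {t : ℝ} (ht : |t| < 1 / 2) :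
    HasSum (fun k => (k.centralBinom : ℝ) * (t ^ (3 * k) / (1 - t) ^ (k + 1)))
      (1 / √((1 - t) * (1 - 2 * t) * (2 * t ^ 2 + t + 1))) := by
  have h1t : 0 < 1 - t := by linarith [le_abs_self t]
  have hsqrt : √((1 - t) * (1 - 2 * t) * (2 * t ^ 2 + t + 1))
      = (1 - t) * √(1 - 4 * (t ^ 3 / (1 - t))) := by
    rw [show (1 - t) * (1 - 2 * t) * (2 * t ^ 2 + t + 1)
        = (1 - t) ^ 2 * (1 - 4 * (t ^ 3 / (1 - t))) by field_simp; ring,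
      Real.sqrt_mul (sq_nonneg _), Real.sqrt_sq h1t.le]
  rw [hsqrt, mul_comm (1 - t), ← div_div]
  refine ((hasSum_centralBinom_mul_pow (abs_pow_three_div_one_sub_lt_one_div_four ht)).div_const
    (1 - t)).congr_fun fun k => ?_
  rw [div_pow, ← pow_mul, pow_succ, ← div_div, mul_div_assoc]

-- For `2 * k > n` the truncated `n - 2 * k` is `0`, and `choose 0 k = 0` since `k > 0`.
def invSqrtCoeff (n : ℕ) : ℕ :=
  ∑ k ∈ Finset.range (n + 1), k.centralBinom * (n - 2 * k).choose k

theorem hasSum_invSqrtCoeff_mul_pow {t : ℝ} (ht : |t| < 1 / 2) :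
    HasSum (fun n => (invSqrtCoeff n : ℝ) * t ^ n)
      (1 / √((1 - t) * (1 - 2 * t) * (2 * t ^ 2 + t + 1))) := by
  set u : ℝ → ℕ → ℕ → ℝ := fun s k n => k.centralBinom * ((n - 2 * k).choose k * s ^ n)
  have hrow : ∀ s : ℝ, |s| < 1 / 2 → ∀ k,
      HasSum (u s k) (k.centralBinom * (s ^ (3 * k) / (1 - s) ^ (k + 1))) := by
    intro s hs k
    have hs1 : ‖s‖ < 1 := by rw [Real.norm_eq_abs]; linarith
    exact (hasSum_choose_sub_two_mul_mul_pow k hs1).mul_left _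
  have habs : |(|t|)| < 1 / 2 := by rwa [abs_abs]
  have hsum : Summable (Function.uncurry (u t)) := by
    have hnorm : (fun p => ‖Function.uncurry (u t) p‖) = Function.uncurry (u |t|) := by
      ext ⟨k, n⟩
      simp [u]
    refine Summable.of_norm (hnorm ▸ ?_)
    refine (summable_prod_of_nonneg fun p => by simp only [u, Function.uncurry]; positivity).2
      ⟨fun k => (hrow _ habs k).summable, ?_⟩
    exact (hasSum_centralBinom_mul_pow_three_mul_div habs).summable.congr
      fun k => ((hrow _ habs k).tsum_eq).symm
  refine HasSum.of_rows_of_cols hsum (hrow t ht) (hasSum_centralBinom_mul_pow_three_mul_div ht)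
    fun n => ?_
  have hcol : ∀ k ∉ Finset.range (n + 1), u t k n = 0 := by
    intro k hk
    rw [Finset.mem_range] at hk
    simp only [u, Nat.choose_eq_zero_of_lt (by omega : n - 2 * k < k), Nat.cast_zero, zero_mul,
      mul_zero]
  convert (hasSum_sum_of_ne_finset_zero hcol : HasSum _ _) using 1
  simp only [invSqrtCoeff, u, Nat.cast_sum, Nat.cast_mul, Finset.sum_mul, mul_assoc]

theorem iteratedDeriv_zero_eq_factorial_mul_of_hasSum {𝕜 : Type*} [RCLike 𝕜] {f : 𝕜 → 𝕜}
    {a : ℕ → 𝕜} {r : ℝ} (hr : 0 < r)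
    (hf : ∀ t : 𝕜, ‖t‖ < r → HasSum (fun n => a n * t ^ n) (f t)) (n : ℕ) :
    iteratedDeriv n f 0 = n ! * a n := by
  set p := FormalMultilinearSeries.ofScalars 𝕜 a
  have hrad : ENNReal.ofReal r ≤ p.radius := by
    refine ENNReal.le_of_forall_nnreal_lt fun ρ hρ => p.le_radius_of_tendsto (l := 0) ?_
    have hρr : ‖((ρ : ℝ) : 𝕜)‖ < r := by simpa using ENNReal.coe_lt_ofReal.1 hρ
    simpa [p, FormalMultilinearSeries.ofScalars_norm, norm_mul, norm_pow] using
      (hf _ hρr).summable.tendsto_atTop_zero.norm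
  have hball : HasFPowerSeriesOnBall f p 0 (ENNReal.ofReal r) :=
    { r_le := hrad
      r_pos := ENNReal.ofReal_pos.2 hr
      hasSum := fun {y} hy => by
        rw [mem_eball_zero_iff, ← ofReal_norm, ENNReal.ofReal_lt_ofReal_iff hr] at hy
        simpa [p, FormalMultilinearSeries.ofScalars_apply_eq, mul_comm] using hf y hy }
  rw [iteratedDeriv_eq_iteratedFDeriv, ← hball.factorial_smul 1 n]
  simp [p]

theorem one_lt_invSqrtCoeff {n : ℕ} (hn : 3 ≤ n) : 1 < invSqrtCoeff n := by
  have h := Finset.add_le_sum (f := fun k => k.centralBinom * (n - 2 * k).choose k)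
    (s := Finset.range (n + 1)) (i := 0) (j := 1) (fun _ _ => Nat.zero_le _)
    (by simp) (by simp; omega) zero_ne_one
  simp only [Nat.centralBinom_zero, Nat.choose_zero_right, Nat.choose_one_right,
    show Nat.centralBinom 1 = 2 from rfl] at h
  rw [invSqrtCoeff]
  omega

theorem hasSum_F {t : ℝ} (ht : |t| < 1 / 2) :
    HasSum (fun n => ((invSqrtCoeff n : ℝ) - 1) / 2 * t ^ n) (F t) := by
  have hgeom := hasSum_geometric_of_abs_lt_one (r := t) (by linarith)
  have hF : F t = (1 / √((1 - t) * (1 - 2 * t) * (2 * t ^ 2 + t + 1)) - (1 - t)⁻¹) / 2 := by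
    unfold F
    ring
  rw [hF]
  exact (((hasSum_invSqrtCoeff_mul_pow ht).sub hgeom).div_const 2).congr_fun fun n => by ring

/-- The generating function is 3-samo: every iterated derivative of `F` at `0`
    of order `n ≥ 3` is strictly positive. -/
theorem F_iteratedDeriv_pos (n : ℕ) (hn : 3 ≤ n) : 0 < iteratedDeriv n F 0 := by
  rw [iteratedDeriv_zero_eq_factorial_mul_of_hasSum (r := 1 / 2) (by norm_num)
    (fun t ht => hasSum_F (by rwa [← Real.norm_eq_abs])) n]
  have hcoeff : (1 : ℝ) < invSqrtCoeff n := by exact_mod_cast one_lt_invSqrtCoeff hn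
  exact mul_pos (by positivity) (div_pos (sub_pos.2 hcoeff) two_pos)
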